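/- Let q be a unital quantum channel on M_n. Suppose there exist m ≥ 1 and a star-algebra automorphism α of Matrix (Fin n × Fin m) (Fin n × Fin m) ℂ (a ℂ-algebra automorphism with α(Xᴴ) = α(X)ᴴ) such that for every integer k ≥ 1 and every A ∈ M_n, q^{(k)}(A) = ptr_m(α^{(k)}(A ⊗ I_m)), where q^{(k)} and α^{(k)} denote k-fold composition. Then q is a *-automorphism of M_n: q is bijective and q(A * B) = q(A) * q(B) for all A, B. In other words, a unital quantum channel that is not a *-automorphism admits no *-automorphic power dilation acting on a finite matrix algebra. -/

import Mathlib

/-!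
Give all matrix algebras the Frobenius norm `‖X‖² = Re tr (Xᴴ X)`. A `*`-automorphism `α`
preserves the trace, hence is an isometry, and `Y ↦ ptr Y ⊗ 1` is the orthogonal projection onto
`Mₙ ⊗ 1`; therefore `‖q^[k] A ⊗ 1‖ ≤ ‖A ⊗ 1‖` for every `k`. An isometry of a finite-dimensional
space is recurrent: `α^[k] (A ⊗ 1)` returns arbitrarily close to `A ⊗ 1` for some `k ≥ 1`, which
forces `‖q A ⊗ 1‖ = ‖A ⊗ 1‖ = ‖α (A ⊗ 1)‖`. Equality in the projection bound then gives
`α (A ⊗ 1) = q A ⊗ 1`, so `q` is `α` restricted to `Mₙ ⊗ 1`: a multiplicative injective linear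
map, bijective by finite dimensionality.
-/

open Matrix
open scoped Kronecker Matrix.Norms.Frobenius

theorem Isometry.iterate {X : Type*} [PseudoEMetricSpace X] {f : X → X} (hf : Isometry f) :
    ∀ k, Isometry f^[k]
  | 0 => isometry_id
  | k + 1 => (hf.iterate k).comp hf

theorem Isometry.exists_pos_iterate_dist_lt {X : Type*} [PseudoMetricSpace X] {f : X → X}
    (hf : Isometry f) {s : Set X} (hs : IsCompact s) {x : X} (hx : ∀ k, f^[k] x ∈ s)
    {ε : ℝ} (hε : 0 < ε) : ∃ k, 0 < k ∧ dist (f^[k] x) x < ε := by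
  obtain ⟨_, _, φ, hφ, hlim⟩ := hs.tendsto_subseq hx
  obtain ⟨N, hN⟩ := Metric.cauchySeq_iff'.mp hlim.cauchySeq ε hε
  obtain ⟨d, hd⟩ := Nat.exists_eq_add_of_lt (hφ N.lt_succ_self)
  refine ⟨d + 1, d.succ_pos, ?_⟩
  have := hN (N + 1) N.le_succ
  rwa [Function.comp_apply, Function.comp_apply, hd, add_assoc,
    Function.iterate_add_apply, (hf.iterate (φ N)).dist_eq] at this

theorem Isometry.norm_iterate_of_map_zero {E : Type*} [SeminormedAddGroup E] {f : E → E}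
    (hf : Isometry f) (hf0 : f 0 = 0) (k : ℕ) (x : E) : ‖f^[k] x‖ = ‖x‖ :=
  (hf.iterate k).norm_map_of_map_zero (Function.iterate_fixed hf0 k) x

namespace Matrix

theorem sub_kronecker {α l m n p : Type*} [NonUnitalNonAssocRing α] (A₁ A₂ : Matrix l m α)
    (B : Matrix n p α) : (A₁ - A₂) ⊗ₖ B = A₁ ⊗ₖ B - A₂ ⊗ₖ B := by
  ext; simp [sub_mul]

variable {𝕜 : Type*} [RCLike 𝕜]

section Frobenius

variable {l n : Type*} [Fintype l] [Fintype n]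

theorem frobenius_norm_sq_eq_re_trace (X : Matrix l n 𝕜) :
    ‖X‖ ^ 2 = RCLike.re (Xᴴ * X).trace := by
  change ‖WithLp.toLp 2 fun i => WithLp.toLp 2 fun j => X i j‖ ^ 2 = _
  simp only [PiLp.norm_sq_eq_of_L2, trace, diag, mul_apply, conjTranspose_apply, map_sum,
    RCLike.star_def, RCLike.conj_mul, ← RCLike.ofReal_pow, RCLike.ofReal_re]
  exact Finset.sum_comm

theorem frobenius_norm_add_sq (X Y : Matrix l n 𝕜) :
    ‖X + Y‖ ^ 2 = ‖X‖ ^ 2 + ‖Y‖ ^ 2 + 2 * RCLike.re (Xᴴ * Y).trace := by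
  have hswap : RCLike.re (Yᴴ * X).trace = RCLike.re (Xᴴ * Y).trace := by
    rw [← conjTranspose_conjTranspose X, ← conjTranspose_mul, trace_conjTranspose,
      RCLike.star_def, RCLike.conj_re, conjTranspose_conjTranspose]
  simp only [frobenius_norm_sq_eq_re_trace, conjTranspose_add, Matrix.add_mul, Matrix.mul_add,
    trace_add, map_add, hswap]
  ring

theorem isometry_algEquiv_of_map_conjTranspose [DecidableEq n]
    (α : Matrix n n 𝕜 ≃ₐ[𝕜] Matrix n n 𝕜) (hα : ∀ X, α Xᴴ = (α X)ᴴ) : Isometry α := by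
  refine AddMonoidHomClass.isometry_of_norm α fun X => ?_
  rw [← sq_eq_sq₀ (norm_nonneg _) (norm_nonneg _), frobenius_norm_sq_eq_re_trace,
    frobenius_norm_sq_eq_re_trace, ← hα, ← map_mul, trace_map]

end Frobenius

section PartialTrace

variable {ι κ : Type*} [Fintype κ]

def normalizedPartialTrace : Matrix (ι × κ) (ι × κ) 𝕜 →ₗ[𝕜] Matrix ι ι 𝕜 where
  toFun Y := of fun a b => (Fintype.card κ : 𝕜)⁻¹ * ∑ j, Y (a, j) (b, j)
  map_add' Y Z := by ext; simp [Finset.sum_add_distrib, mul_add]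
  map_smul' c Y := by ext; simp [Finset.mul_sum, mul_left_comm]

theorem normalizedPartialTrace_apply (Y : Matrix (ι × κ) (ι × κ) 𝕜) (a b : ι) :
    normalizedPartialTrace Y a b = (Fintype.card κ : 𝕜)⁻¹ * ∑ j, Y (a, j) (b, j) :=
  rfl

variable [DecidableEq κ] [Nonempty κ]

theorem normalizedPartialTrace_kronecker_one (A : Matrix ι ι 𝕜) :
    normalizedPartialTrace (A ⊗ₖ (1 : Matrix κ κ 𝕜)) = A := by
  ext a b
  simp [normalizedPartialTrace_apply]

theorem kronecker_one_injective :
    Function.Injective fun A : Matrix ι ι 𝕜 => A ⊗ₖ (1 : Matrix κ κ 𝕜) :=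
  Function.LeftInverse.injective normalizedPartialTrace_kronecker_one

variable [Fintype ι]

theorem trace_kronecker_one_mul (B : Matrix ι ι 𝕜) (Y : Matrix (ι × κ) (ι × κ) 𝕜) :
    (B ⊗ₖ (1 : Matrix κ κ 𝕜) * Y).trace
      = Fintype.card κ * (B * normalizedPartialTrace Y).trace := by
  have hcard : (Fintype.card κ : 𝕜) ≠ 0 := Nat.cast_ne_zero.mpr Fintype.card_ne_zero
  simp only [trace, diag, mul_apply, normalizedPartialTrace_apply, kronecker_apply, one_apply,
    Fintype.sum_prod_type, mul_ite, mul_one, mul_zero, ite_mul, zero_mul, Finset.sum_ite_eq,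
    Finset.mem_univ, if_true, Finset.mul_sum, mul_left_comm _ (B _ _), mul_inv_cancel_left₀ hcard]
  exact Finset.sum_congr rfl fun a _ => Finset.sum_comm

theorem norm_sq_eq_norm_sq_normalizedPartialTrace_kronecker_one_add
    (Y : Matrix (ι × κ) (ι × κ) 𝕜) :
    ‖Y‖ ^ 2 = ‖normalizedPartialTrace Y ⊗ₖ (1 : Matrix κ κ 𝕜)‖ ^ 2
      + ‖Y - normalizedPartialTrace Y ⊗ₖ (1 : Matrix κ κ 𝕜)‖ ^ 2 := by
  have horth : ((normalizedPartialTrace Y ⊗ₖ (1 : Matrix κ κ 𝕜))ᴴ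
      * (Y - normalizedPartialTrace Y ⊗ₖ (1 : Matrix κ κ 𝕜))).trace = 0 := by
    rw [conjTranspose_kronecker, conjTranspose_one, trace_kronecker_one_mul, map_sub,
      normalizedPartialTrace_kronecker_one, sub_self, mul_zero, trace_zero, mul_zero]
  simpa [horth] using frobenius_norm_add_sq (normalizedPartialTrace Y ⊗ₖ (1 : Matrix κ κ 𝕜))
    (Y - normalizedPartialTrace Y ⊗ₖ (1 : Matrix κ κ 𝕜))

theorem norm_normalizedPartialTrace_kronecker_one_le (Y : Matrix (ι × κ) (ι × κ) 𝕜) :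
    ‖normalizedPartialTrace Y ⊗ₖ (1 : Matrix κ κ 𝕜)‖ ≤ ‖Y‖ := by
  rw [← sq_le_sq₀ (norm_nonneg _) (norm_nonneg _),
    norm_sq_eq_norm_sq_normalizedPartialTrace_kronecker_one_add Y]
  exact le_add_of_nonneg_right (sq_nonneg _)

theorem normalizedPartialTrace_kronecker_one_eq_of_norm_eq {Y : Matrix (ι × κ) (ι × κ) 𝕜}
    (h : ‖normalizedPartialTrace Y ⊗ₖ (1 : Matrix κ κ 𝕜)‖ = ‖Y‖) :
    normalizedPartialTrace Y ⊗ₖ (1 : Matrix κ κ 𝕜) = Y := by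
  have := norm_sq_eq_norm_sq_normalizedPartialTrace_kronecker_one_add Y
  rw [h, left_eq_add, sq_eq_zero_iff, norm_eq_zero, sub_eq_zero] at this
  exact this.symm

end PartialTrace

end Matrix

variable {𝕜 ι κ : Type*} [RCLike 𝕜] [Fintype ι] [Fintype κ] [DecidableEq κ]

def IsPowerDilation (f : Matrix ι ι 𝕜 → Matrix ι ι 𝕜)
    (α : Matrix (ι × κ) (ι × κ) 𝕜 → Matrix (ι × κ) (ι × κ) 𝕜) : Prop :=
  ∀ k, 0 < k → ∀ A, f^[k] A = normalizedPartialTrace (α^[k] (A ⊗ₖ (1 : Matrix κ κ 𝕜)))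

namespace IsPowerDilation

variable [Nonempty κ] {f : Matrix ι ι 𝕜 → Matrix ι ι 𝕜}
  {α : Matrix (ι × κ) (ι × κ) 𝕜 → Matrix (ι × κ) (ι × κ) 𝕜}

theorem norm_iterate_kronecker_one_le (h : IsPowerDilation f α) (hα : Isometry α)
    (hα0 : α 0 = 0) (k : ℕ) (A : Matrix ι ι 𝕜) :
    ‖f^[k] A ⊗ₖ (1 : Matrix κ κ 𝕜)‖ ≤ ‖A ⊗ₖ (1 : Matrix κ κ 𝕜)‖ := by
  rcases k.eq_zero_or_pos with rfl | hk
  · exact le_rfl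
  rw [h k hk, ← hα.norm_iterate_of_map_zero hα0 k (A ⊗ₖ 1)]
  exact norm_normalizedPartialTrace_kronecker_one_le _

theorem norm_kronecker_one_le_apply (h : IsPowerDilation f α) (hα : Isometry α)
    (hα0 : α 0 = 0) (A : Matrix ι ι 𝕜) :
    ‖A ⊗ₖ (1 : Matrix κ κ 𝕜)‖ ≤ ‖f A ⊗ₖ (1 : Matrix κ κ 𝕜)‖ := by
  have : ProperSpace (Matrix (ι × κ) (ι × κ) 𝕜) := FiniteDimensional.proper_rclike 𝕜 _
  set X := A ⊗ₖ (1 : Matrix κ κ 𝕜)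
  refine le_of_forall_pos_le_add fun ε hε => ?_
  have horbit : ∀ k, α^[k] X ∈ Metric.closedBall 0 ‖X‖ := fun k => by
    rw [mem_closedBall_zero_iff, hα.norm_iterate_of_map_zero hα0]
  obtain ⟨k, hk, hdist⟩ := hα.exists_pos_iterate_dist_lt (isCompact_closedBall 0 ‖X‖) horbit hε
  have hclose : ‖f^[k] A ⊗ₖ (1 : Matrix κ κ 𝕜) - X‖ < ε := calc
    ‖f^[k] A ⊗ₖ (1 : Matrix κ κ 𝕜) - X‖
        = ‖normalizedPartialTrace (α^[k] X - X) ⊗ₖ (1 : Matrix κ κ 𝕜)‖ := by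
      rw [map_sub, sub_kronecker, normalizedPartialTrace_kronecker_one, ← h k hk]
    _ ≤ ‖α^[k] X - X‖ := norm_normalizedPartialTrace_kronecker_one_le _
    _ < ε := by rwa [← dist_eq_norm]
  obtain ⟨j, rfl⟩ := Nat.exists_eq_succ_of_ne_zero hk.ne'
  rw [Function.iterate_succ_apply] at hclose
  calc ‖X‖ ≤ ‖f^[j] (f A) ⊗ₖ (1 : Matrix κ κ 𝕜)‖ + ‖f^[j] (f A) ⊗ₖ (1 : Matrix κ κ 𝕜) - X‖ :=
        norm_le_norm_add_norm_sub _ _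
    _ ≤ ‖f A ⊗ₖ (1 : Matrix κ κ 𝕜)‖ + ε :=
      add_le_add (h.norm_iterate_kronecker_one_le hα hα0 j (f A)) hclose.le

theorem apply_kronecker_one (h : IsPowerDilation f α) (hα : Isometry α)
    (hα0 : α 0 = 0) (A : Matrix ι ι 𝕜) :
    α (A ⊗ₖ (1 : Matrix κ κ 𝕜)) = f A ⊗ₖ (1 : Matrix κ κ 𝕜) := by
  have hf : f A = normalizedPartialTrace (α (A ⊗ₖ (1 : Matrix κ κ 𝕜))) := h 1 one_pos A
  rw [hf]
  refine (normalizedPartialTrace_kronecker_one_eq_of_norm_eq (le_antisymm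
    (norm_normalizedPartialTrace_kronecker_one_le _) ?_)).symm
  rw [hα.norm_map_of_map_zero hα0, ← hf]
  exact h.norm_kronecker_one_le_apply hα hα0 A

end IsPowerDilation

theorem no_power_dilation_on_matrix_algebra_general
    (n m : ℕ) [NeZero m]
    (q : Matrix (Fin n) (Fin n) ℂ → Matrix (Fin n) (Fin n) ℂ)
    (α : Matrix (Fin n × Fin m) (Fin n × Fin m) ℂ ≃ₐ[ℂ]
         Matrix (Fin n × Fin m) (Fin n × Fin m) ℂ)
    (hα_star : ∀ X, α Xᴴ = (α X)ᴴ)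
    (hdil : ∀ (k : ℕ), 1 ≤ k → ∀ (A : Matrix (Fin n) (Fin n) ℂ) (a b : Fin n),
      (q^[k] A) a b
        = (1 / (m : ℂ)) * ∑ j : Fin m,
            ((⇑α)^[k] (A ⊗ₖ (1 : Matrix (Fin m) (Fin m) ℂ))) (a, j) (b, j)) :
    Function.Bijective q ∧ ∀ A B, q (A * B) = q A * q B := by
  have hq : IsPowerDilation q α := fun k hk A => by
    ext a b
    rw [hdil k hk A a b, normalizedPartialTrace_apply, Fintype.card_fin, one_div]
  have hqα :=
    hq.apply_kronecker_one (isometry_algEquiv_of_map_conjTranspose α hα_star) (map_zero α)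
  have hinj : Function.Injective q := fun A B hAB =>
    kronecker_one_injective (α.injective (by simp only [hqα, hAB]))
  let qₗ := normalizedPartialTrace ∘ₗ α.toLinearMap ∘ₗ
    (kroneckerBilinear (R := ℂ) (α := ℂ)).flip (1 : Matrix (Fin m) (Fin m) ℂ)
  have hqₗ : ⇑qₗ = q := funext fun A => (hq 1 one_pos A).symm
  have hsurj : Function.Surjective q :=
    hqₗ ▸ LinearMap.injective_iff_surjective.mp (hqₗ ▸ hinj)
  refine ⟨⟨hinj, hsurj⟩, fun A B => kronecker_one_injective (κ := Fin m) ?_⟩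
  calc q (A * B) ⊗ₖ (1 : Matrix (Fin m) (Fin m) ℂ)
      = α (A ⊗ₖ 1) * α (B ⊗ₖ 1) := by rw [← hqα, ← map_mul, ← mul_kronecker_mul, mul_one]
    _ = (q A * q B) ⊗ₖ 1 := by rw [hqα, hqα, ← mul_kronecker_mul, mul_one]

/-- Corollary `nopower`: if a unital quantum channel `q` on `Mₙ` admits a
`*`-automorphic power dilation acting on a finite matrix algebra `Mₙ ⊗ M_m` — i.e. there is
a star-algebra automorphism `α` with `q^{(k)}(A) = ptr_m(α^{(k)}(A ⊗ I))` for all `k ≥ 1` —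
then `q` is itself a `*`-automorphism of `Mₙ`. -/
theorem no_power_dilation_on_matrix_algebra
    (n m p : ℕ) [NeZero n] [NeZero m]
    (q : Matrix (Fin n) (Fin n) ℂ → Matrix (Fin n) (Fin n) ℂ)
    (qk : Fin p → Matrix (Fin n) (Fin n) ℂ)
    (hq : ∀ A, q A = ∑ k, qk k * A * (qk k)ᴴ)
    (hq_unital : ∑ k, qk k * (qk k)ᴴ = 1)
    (hq_tp : ∑ k, (qk k)ᴴ * qk k = 1)
    (α : Matrix (Fin n × Fin m) (Fin n × Fin m) ℂ ≃ₐ[ℂ]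
         Matrix (Fin n × Fin m) (Fin n × Fin m) ℂ)
    (hα_star : ∀ X, α Xᴴ = (α X)ᴴ)
    (hdil : ∀ (k : ℕ), 1 ≤ k → ∀ (A : Matrix (Fin n) (Fin n) ℂ) (a b : Fin n),
      (q^[k] A) a b
        = (1 / (m : ℂ)) * ∑ j : Fin m,
            ((⇑α)^[k] (A ⊗ₖ (1 : Matrix (Fin m) (Fin m) ℂ))) (a, j) (b, j)) :
    Function.Bijective q ∧ ∀ A B, q (A * B) = q A * q B :=
  no_power_dilation_on_matrix_algebra_general n m q α hα_star hdil
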